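/- There exist a real number ε > 0, a finite set Λ of unit vectors in ℝ³ all of whose coordinates are rational, an assignment to each η ∈ Λ of two vectors η₁, η₂ ∈ ℝ³ such that (η, η₁, η₂) is an orthonormal frame, and functions Γ_η : Sym³ → ℝ (one for each η ∈ Λ) that are smooth on the open ball of radius ε centered at the identity matrix, such that every symmetric 3×3 real matrix R with ‖R − Id‖ < ε satisfies R = Σ_{η∈Λ} Γ_η(R)² · (η₁ ⊗ η₁). -/

import Mathlib

open scoped BigOperators

attribute [local instance] Matrix.normedAddCommGroup Matrix.normedSpace

/-- Euclidean dot product on `ℝ³` (vectors as `Fin 3 → ℝ`). -/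
def dot3 (a b : Fin 3 → ℝ) : ℝ := ∑ i, a i * b i

/-- `(e₀, e₁, e₂)` is an orthonormal frame (orthonormal basis) of `ℝ³`. -/
def IsONFrame (e₀ e₁ e₂ : Fin 3 → ℝ) : Prop :=
  dot3 e₀ e₀ = 1 ∧ dot3 e₁ e₁ = 1 ∧ dot3 e₂ e₂ = 1 ∧
  dot3 e₀ e₁ = 0 ∧ dot3 e₀ e₂ = 0 ∧ dot3 e₁ e₂ = 0

/-- All three coordinates of a vector are rational. -/
def RatCoords (a : Fin 3 → ℝ) : Prop := ∀ i, ∃ q : ℚ, a i = (q : ℝ)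

/-- Integer coordinates (×5) of the normals `η`. -/
def Qv : Fin 9 → Fin 3 → ℤ :=
  ![![0,5,0], ![0,0,5], ![5,0,0],
    ![-4,3,0], ![4,3,0],
    ![-4,0,3], ![4,0,3],
    ![0,-4,3], ![0,4,3]]

/-- Integer coordinates (×5) of the directions `η₁`. -/
def Qd : Fin 9 → Fin 3 → ℤ :=
  ![![5,0,0], ![0,5,0], ![0,0,5],
    ![3,4,0], ![3,-4,0],
    ![3,0,4], ![3,0,-4],
    ![0,3,4], ![0,3,-4]]

/-- Integer coordinates (×5) of the third frame vectors `η₂`. -/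
def Qe : Fin 9 → Fin 3 → ℤ :=
  ![![0,0,-5], ![-5,0,0], ![0,-5,0],
    ![0,0,-5], ![0,0,-5],
    ![0,5,0], ![0,5,0],
    ![-5,0,0], ![-5,0,0]]

noncomputable def vv (k : Fin 9) : Fin 3 → ℝ := fun i => (Qv k i : ℝ)/5
noncomputable def dd (k : Fin 9) : Fin 3 → ℝ := fun i => (Qd k i : ℝ)/5
noncomputable def ee (k : Fin 9) : Fin 3 → ℝ := fun i => (Qe k i : ℝ)/5

lemma Qv_inj : Function.Injective Qv := by decide

lemma vv_inj : Function.Injective vv := by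
  intro a b h
  apply Qv_inj
  funext i
  have h2 := congrFun h i
  simp only [vv, div_eq_div_iff] at h2
  have : ((Qv a i : ℝ)) = (Qv b i : ℝ) := by
    field_simp at h2; exact_mod_cast h2
  exact_mod_cast this

noncomputable def pick (v : Fin 3 → ℝ) : Fin 9 :=
  if h : ∃ k, vv k = v then h.choose else 0

lemma pick_vv (k : Fin 9) : pick (vv k) = k := by
  have h : ∃ k', vv k' = vv k := ⟨k, rfl⟩
  simp only [pick, dif_pos h]
  exact vv_inj h.choose_spec

/-- the coefficients (squares of the Γ's) -/
noncomputable def cf (k : Fin 9) (R : Matrix (Fin 3) (Fin 3) ℝ) : ℝ :=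
  if k = 0 then R 0 0 - 9/25 else if k = 1 then R 1 1 - 1/2
  else if k = 2 then R 2 2 - 16/25
  else if k = 3 then 1/4 + 25/24 * R 0 1 else if k = 4 then 1/4 - 25/24 * R 0 1
  else if k = 5 then 1/4 + 25/24 * R 0 2 else if k = 6 then 1/4 - 25/24 * R 0 2
  else if k = 7 then 1/4 + 25/24 * R 1 2 else 1/4 - 25/24 * R 1 2

/-- vector-notation form of the coefficients -/
noncomputable def cfv (R : Matrix (Fin 3) (Fin 3) ℝ) : Fin 9 → ℝ :=
  ![R 0 0 - 9/25, R 1 1 - 1/2, R 2 2 - 16/25,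
    1/4 + 25/24 * R 0 1, 1/4 - 25/24 * R 0 1,
    1/4 + 25/24 * R 0 2, 1/4 - 25/24 * R 0 2,
    1/4 + 25/24 * R 1 2, 1/4 - 25/24 * R 1 2]

lemma cf_eq (k : Fin 9) (R : Matrix (Fin 3) (Fin 3) ℝ) : cf k R = cfv R k := by
  fin_cases k <;> rfl

lemma frame_ok (k : Fin 9) : IsONFrame (vv k) (dd k) (ee k) := by
  fin_cases k <;>
    norm_num [IsONFrame, dot3, vv, dd, ee, Qv, Qd, Qe, Fin.sum_univ_three, Matrix.cons_val_two, Matrix.vecHead, Matrix.vecTail]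

lemma entry_bound {R : Matrix (Fin 3) (Fin 3) ℝ} (hR : ‖R - 1‖ < 1/10) (i j : Fin 3) :
    |R i j - (1 : Matrix (Fin 3) (Fin 3) ℝ) i j| < 1/10 := by
  have h := Matrix.norm_entry_le_entrywise_sup_norm (R - 1) (i := i) (j := j)
  rw [Matrix.sub_apply, Real.norm_eq_abs] at h
  linarith

lemma cf_pos {R : Matrix (Fin 3) (Fin 3) ℝ} (hR : ‖R - 1‖ < 1/10) (k : Fin 9) :
    0 < cf k R := by
  have h00 := entry_bound hR 0 0
  have h11 := entry_bound hR 1 1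
  have h22 := entry_bound hR 2 2
  have h01 := entry_bound hR 0 1
  have h02 := entry_bound hR 0 2
  have h12 := entry_bound hR 1 2
  rw [Matrix.one_apply_eq, abs_lt] at h00 h11 h22
  rw [Matrix.one_apply_ne (by decide), sub_zero, abs_lt] at h01 h02 h12
  obtain ⟨a, b⟩ := h00; obtain ⟨c, d⟩ := h11; obtain ⟨e', f⟩ := h22
  obtain ⟨g, h⟩ := h01; obtain ⟨i', j'⟩ := h02; obtain ⟨kk, l⟩ := h12
  fin_cases k <;> simp [cf] <;> linarith

lemma entry_smooth (i j : Fin 3) :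
    ContDiff ℝ (⊤ : ℕ∞) (fun R : Matrix (Fin 3) (Fin 3) ℝ => R i j) := by
  exact (contDiff_pi.mp ((contDiff_pi.mp contDiff_id) i)) j

lemma cf_smooth (k : Fin 9) : ContDiff ℝ (⊤ : ℕ∞) (cf k) := by
  fin_cases k <;> simp only [cf, if_true, if_false, reduceIte] <;>
  first
    | exact (entry_smooth _ _).sub contDiff_const
    | exact contDiff_const.add (contDiff_const.mul (entry_smooth _ _))
    | exact contDiff_const.sub (contDiff_const.mul (entry_smooth _ _))

/-- Symmetric geometric lemma: decomposition of symmetric `3×3` matrices near the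
identity matrix as a positive combination of rank-one tensors `η₁ ⊗ η₁`. -/
theorem symmetric_geometric_lemma :
    ∃ (ε : ℝ) (Λ : Finset (Fin 3 → ℝ))
      (η₁ η₂ : (Fin 3 → ℝ) → (Fin 3 → ℝ))
      (Γ : (Fin 3 → ℝ) → Matrix (Fin 3) (Fin 3) ℝ → ℝ),
      0 < ε ∧
      (∀ η ∈ Λ, RatCoords η ∧ IsONFrame η (η₁ η) (η₂ η)) ∧
      (∀ η ∈ Λ, ContDiffOn ℝ (⊤ : ℕ∞) (Γ η) (Metric.ball (1 : Matrix (Fin 3) (Fin 3) ℝ) ε)) ∧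
      (∀ R : Matrix (Fin 3) (Fin 3) ℝ, R.IsSymm → ‖R - 1‖ < ε →
        R = ∑ η ∈ Λ, (Γ η R) ^ 2 • Matrix.vecMulVec (η₁ η) (η₁ η)) := by
  refine ⟨1/10, Finset.image vv Finset.univ,
    fun v => dd (pick v), fun v => ee (pick v),
    fun v R => Real.sqrt (cf (pick v) R), by norm_num, ?_, ?_, ?_⟩
  · intro η hη
    obtain ⟨k, -, rfl⟩ := Finset.mem_image.mp hη
    simp only [pick_vv]
    refine ⟨fun i => ⟨(Qv k i : ℚ)/5, by push_cast [vv]; ring⟩, frame_ok k⟩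
  · intro η hη
    obtain ⟨k, -, rfl⟩ := Finset.mem_image.mp hη
    simp only [pick_vv]
    intro R hR
    have hR' : ‖R - 1‖ < 1/10 := by
      rw [← dist_eq_norm]; exact Metric.mem_ball.mp hR
    exact (((cf_smooth k).contDiffAt).sqrt (ne_of_gt (cf_pos hR' k))).contDiffWithinAt
  · intro R hsymm hR
    rw [Finset.sum_image (fun a _ b _ h => vv_inj h)]
    simp only [pick_vv]
    have hsq : ∀ k : Fin 9, (Real.sqrt (cf k R)) ^ 2 = cf k R :=
      fun k => Real.sq_sqrt (cf_pos hR k).le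
    simp only [hsq]
    have h10 : R 1 0 = R 0 1 := hsymm.apply 0 1
    have h20 : R 2 0 = R 0 2 := hsymm.apply 0 2
    have h21 : R 2 1 = R 1 2 := hsymm.apply 1 2
    funext i j
    have : (∑ k : Fin 9, cf k R • Matrix.vecMulVec (dd k) (dd k)) i j
        = ∑ k : Fin 9, cf k R * (dd k i * dd k j) := by
      rw [Matrix.sum_apply]
      refine Finset.sum_congr rfl fun k _ => ?_
      rw [Matrix.smul_apply, Matrix.vecMulVec_apply, smul_eq_mul]
    rw [this]
    simp only [cf_eq]
    fin_cases i <;> fin_cases j <;>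
      · norm_num [Fin.sum_univ_succ, cfv, dd, Qd]
        ring_nf
        try rw [h10]
        try rw [h20]
        try rw [h21]
        try ring_nf
        try linarith [h10, h20, h21]
        try rfl
        try exact h20
        try exact h21
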